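/- arXiv:1010.4071 — 3 statements merged into one kernel-verified Lean document; each statement's English description precedes it below -/
import Mathlib

section
/- Let R be a commutative ring and let M = ⊕_{i∈ℤ} M_i be a ℤ-graded module over the polynomial ring R[z], where z is homogeneous of degree 1, and assume multiplication by z is injective on M. For each i let F_{≤i} ⊆ M/(z−1)M denote the image of M_i under the quotient map M → M/(z−1)M. Then F_{≤i−1} ⊆ F_{≤i} for all i, and the quotient map induces an isomorphism of R-modules M_i/(z·M_{i−1}) ≅ F_{≤i}/F_{≤i−1}. (That is, the i-th graded piece of the associated graded of the Klyachko filtration of the fiber at 1 is naturally isomorphic to the degree-i weight space of the fiber M/zM at 0.) -/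
open Polynomial

variable (R M : Type*) [CommRing R] [AddCommGroup M] [Module R M]
  [Module (Polynomial R) M] [IsScalarTower R (Polynomial R) M]

/-- Multiplication by `z` (`= X`) on an `R[z]`-module, as an `R`-linear endomorphism. -/
noncomputable def zMul : M →ₗ[R] M where
  toFun m := (X : Polynomial R) • m
  map_add' a b := smul_add _ a b
  map_smul' r m := by simpa using smul_comm (X : Polynomial R) r m

/-- Multiplication by `z − 1` on an `R[z]`-module, as an `R`-linear endomorphism. -/
noncomputable def zSubOne : M →ₗ[R] M where
  toFun m := (X - 1 : Polynomial R) • m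
  map_add' a b := smul_add _ a b
  map_smul' r m := by simpa using smul_comm (X - 1 : Polynomial R) r m

/-- The `R`-submodule `(z − 1)·M ⊆ M`. -/
noncomputable def zSubOneRange : Submodule R M := LinearMap.range (zSubOne R M)

/-- The Klyachko filtration of the fiber `M/(z−1)M` of a `ℤ`-graded `R[z]`-module at `1`:
`F_{≤ i}` is the image of the degree-`i` component `ℳ i` under the quotient map. -/
noncomputable def klyachkoF (ℳ : ℤ → Submodule R M) (i : ℤ) :
    Submodule R (M ⧸ zSubOneRange R M) :=
  Submodule.map (zSubOneRange R M).mkQ (ℳ i)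

section Graded

variable {R M}

lemma zSubOneRange_mkQ_X_smul (m : M) :
    (zSubOneRange R M).mkQ ((X : Polynomial R) • m) = (zSubOneRange R M).mkQ m := by
  rw [Submodule.mkQ_apply, Submodule.mkQ_apply, Submodule.Quotient.eq]
  exact ⟨m, by simp [zSubOne, sub_smul]⟩

variable (ℳ : ℤ → Submodule R M) [DirectSum.Decomposition ℳ]
  (hdeg : ∀ j : ℤ, ∀ m ∈ ℳ j, (X : Polynomial R) • m ∈ ℳ (j + 1))
include hdeg

omit [IsScalarTower R R[X] M] in
lemma decompose_X_smul (u : M) (j : ℤ) :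
    (DirectSum.decompose ℳ ((X : Polynomial R) • u) j : M) =
      (X : Polynomial R) • (DirectSum.decompose ℳ u (j - 1) : M) := by
  induction u using DirectSum.Decomposition.inductionOn ℳ with
  | zero => simp
  | @homogeneous k m =>
    have hXm : (X : Polynomial R) • (m : M) ∈ ℳ (k + 1) := hdeg k m m.2
    by_cases hj : j = k + 1
    · subst hj
      rw [DirectSum.decompose_of_mem_same ℳ hXm,
        DirectSum.decompose_of_mem_same ℳ (by simp)]
    · rw [DirectSum.decompose_of_mem_ne ℳ hXm (fun h => hj h.symm),
        DirectSum.decompose_of_mem_ne ℳ m.2 (by omega), smul_zero]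
  | add a b ha hb =>
    simp only [smul_add, DirectSum.decompose_add, DirectSum.add_apply, Submodule.coe_add, ha, hb]

omit [IsScalarTower R R[X] M] in
lemma decompose_X_sub_one_smul (u : M) (j : ℤ) :
    (DirectSum.decompose ℳ ((X - 1 : Polynomial R) • u) j : M) =
      (X : Polynomial R) • (DirectSum.decompose ℳ u (j - 1) : M) -
        (DirectSum.decompose ℳ u j : M) := by
  rw [sub_smul, one_smul, DirectSum.decompose_sub, DirectSum.sub_apply, Submodule.coe_sub,
    decompose_X_smul ℳ hdeg]

/-- Look at the top nonzero component `u_d` of `u`: if `d ≥ i`, then the degree `d + 1`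
component of `(z - 1) • u` is `z • u_d ≠ 0`. -/
lemma decompose_eq_zero_of_X_sub_one_smul (hinj : Function.Injective (zMul R M))
    {i : ℤ} {u : M}
    (hu : ∀ j, i < j → DirectSum.decompose ℳ ((X - 1 : Polynomial R) • u) j = 0) :
    ∀ j, i ≤ j → DirectSum.decompose ℳ u j = 0 := by
  classical
  by_contra! ⟨j, hij, hj⟩
  set s := (DirectSum.decompose ℳ u).support
  have hjs : j ∈ s := DFinsupp.mem_support_iff.mpr hj
  set d := s.max' ⟨j, hjs⟩
  have hd : d ∈ s := s.max'_mem _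
  have hjd : j ≤ d := s.le_max' j hjs
  have htop : DirectSum.decompose ℳ u (d + 1) = 0 := by
    by_contra h
    have := s.le_max' (d + 1) (DFinsupp.mem_support_iff.mpr h)
    omega
  have hX : (X : Polynomial R) • (DirectSum.decompose ℳ u d : M) = 0 := by
    have h := decompose_X_sub_one_smul ℳ hdeg u (d + 1)
    rw [hu (d + 1) (by omega), htop, add_sub_cancel_right] at h
    simpa using h.symm
  have hud : (DirectSum.decompose ℳ u d : M) = 0 :=
    hinj (a₂ := 0) (by simpa [zMul] using hX)
  exact DFinsupp.mem_support_iff.mp hd (by exact_mod_cast hud)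

/-- Comparing components in degrees `> i` of `x - n = (z - 1) • u` kills `u` in degrees `≥ i`,
and then the degree `i` component reads `x = z • u_{i-1}`. -/
lemma exists_X_smul_eq_of_sub_mem_zSubOneRange (hinj : Function.Injective (zMul R M))
    {i : ℤ} {x n : M} (hx : x ∈ ℳ i) (hn : n ∈ ℳ (i - 1)) (hxn : x - n ∈ zSubOneRange R M) :
    ∃ m ∈ ℳ (i - 1), (X : Polynomial R) • m = x := by
  obtain ⟨u, hu⟩ := hxn
  change (X - 1 : Polynomial R) • u = x - n at hu
  have hcomp : ∀ j, (DirectSum.decompose ℳ ((X - 1 : Polynomial R) • u) j : M) =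
      (DirectSum.decompose ℳ x j : M) - (DirectSum.decompose ℳ n j : M) := by
    intro j
    rw [hu, DirectSum.decompose_sub, DirectSum.sub_apply, Submodule.coe_sub]
  have hupper : ∀ j, i ≤ j → DirectSum.decompose ℳ u j = 0 := by
    refine decompose_eq_zero_of_X_sub_one_smul ℳ hdeg hinj fun j hj => ?_
    rw [← Submodule.coe_eq_zero, hcomp, DirectSum.decompose_of_mem_ne ℳ hx (by omega),
      DirectSum.decompose_of_mem_ne ℳ hn (by omega), sub_zero]
  refine ⟨_, (DirectSum.decompose ℳ u (i - 1)).2, ?_⟩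
  have h := decompose_X_sub_one_smul ℳ hdeg u i
  rw [hcomp, DirectSum.decompose_of_mem_same ℳ hx, DirectSum.decompose_of_mem_ne ℳ hn (by omega),
    hupper i le_rfl, Submodule.coe_zero, sub_zero, sub_zero] at h
  exact h.symm

omit [DirectSum.Decomposition ℳ] in
lemma klyachkoF_sub_one_le (i : ℤ) : klyachkoF R M ℳ (i - 1) ≤ klyachkoF R M ℳ i := by
  rintro _ ⟨m, hm, rfl⟩
  exact ⟨(X : Polynomial R) • m, by simpa using hdeg (i - 1) m hm, zSubOneRange_mkQ_X_smul m⟩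

lemma mkQ_mem_klyachkoF_sub_one_iff (hinj : Function.Injective (zMul R M)) {i : ℤ} {x : M}
    (hx : x ∈ ℳ i) :
    (zSubOneRange R M).mkQ x ∈ klyachkoF R M ℳ (i - 1) ↔ x ∈ (ℳ (i - 1)).map (zMul R M) := by
  constructor
  · rintro ⟨n, hn, hnx⟩
    have hxn : x - n ∈ zSubOneRange R M := (Submodule.Quotient.eq _).mp hnx.symm
    exact exists_X_smul_eq_of_sub_mem_zSubOneRange ℳ hdeg hinj hx hn hxn
  · rintro ⟨m, hm, rfl⟩
    exact ⟨m, hm, (zSubOneRange_mkQ_X_smul m).symm⟩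

end Graded

/-- Let `M = ⊕ᵢ Mᵢ` be a `ℤ`-graded `R[z]`-module (`z` of degree `1`)
with multiplication by `z` injective, and let `F_{≤i} ⊆ M/(z−1)M` be the Klyachko
filtration (image of `Mᵢ`).  Then `F_{≤i−1} ⊆ F_{≤i}`, and the quotient map induces an
isomorphism `Mᵢ/(z·Mᵢ₋₁) ≅ F_{≤i}/F_{≤i−1}`: the natural map
`Mᵢ → F_{≤i}/F_{≤i−1}` is surjective with kernel `z·Mᵢ₋₁`. -/
theorem statement15 (R M : Type*) [CommRing R] [AddCommGroup M] [Module R M]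
    [Module (Polynomial R) M] [IsScalarTower R (Polynomial R) M]
    (ℳ : ℤ → Submodule R M) (hinternal : DirectSum.IsInternal ℳ)
    (hdeg : ∀ j : ℤ, ∀ m ∈ ℳ j, (X : Polynomial R) • m ∈ ℳ (j + 1))
    (hinj : Function.Injective (zMul R M)) (i : ℤ) :
    klyachkoF R M ℳ (i - 1) ≤ klyachkoF R M ℳ i ∧
      ∃ hcod : ∀ x : ℳ i, (zSubOneRange R M).mkQ (x : M) ∈ klyachkoF R M ℳ i,
        Function.Surjective
          (((Submodule.comap (klyachkoF R M ℳ i).subtype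
              (klyachkoF R M ℳ (i - 1))).mkQ).comp
            (LinearMap.codRestrict (klyachkoF R M ℳ i)
              ((zSubOneRange R M).mkQ.comp (ℳ i).subtype) hcod)) ∧
        LinearMap.ker
          (((Submodule.comap (klyachkoF R M ℳ i).subtype
              (klyachkoF R M ℳ (i - 1))).mkQ).comp
            (LinearMap.codRestrict (klyachkoF R M ℳ i)
              ((zSubOneRange R M).mkQ.comp (ℳ i).subtype) hcod)) =
          Submodule.comap (ℳ i).subtype (Submodule.map (zMul R M) (ℳ (i - 1))) := by
  let := hinternal.chooseDecomposition
  refine ⟨klyachkoF_sub_one_le ℳ hdeg i, fun x => ⟨x, x.2, rfl⟩, ?_, ?_⟩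
  · intro q
    obtain ⟨⟨_, m, hm, rfl⟩, rfl⟩ := Submodule.mkQ_surjective _ q
    exact ⟨⟨m, hm⟩, rfl⟩
  · ext x
    simp only [LinearMap.mem_ker, LinearMap.comp_apply, Submodule.mkQ_apply,
      Submodule.Quotient.mk_eq_zero, Submodule.mem_comap, Submodule.subtype_apply]
    exact mkQ_mem_klyachkoF_sub_one_iff ℳ hdeg hinj x.2
end

section
/- Let k be a field, let E be a finite-dimensional k-vector space, and let (F_{≤i})_{i∈ℤ} be an increasing family of subspaces of E (F_{≤i} ⊆ F_{≤i+1}) with F_{≤i} = 0 for all sufficiently small i and F_{≤i} = E for all sufficiently large i. Then there exists a ℤ-graded module M = ⊕_{i∈ℤ} M_i over the polynomial ring k[z] (z homogeneous of degree 1), which is finitely generated and free as a k[z]-module, together with a k-linear isomorphism φ : M/(z−1)M ≅ E such that φ carries the image of M_i in M/(z−1)M onto F_{≤i} for every i ∈ ℤ. (This is the essential surjectivity in the equivalence between 𝔾_m-equivariant vector bundles on 𝔸¹ and finite-dimensional vector spaces with increasing exhaustive bounded filtrations.) -/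
open Polynomial

variable (R M : Type*) [CommRing R] [AddCommGroup M] [Module R M]
  [Module (Polynomial R) M] [IsScalarTower R (Polynomial R) M]

/-!
The module is the Rees module `⨁ᵢ F i` of the filtration, on which `z` acts by the inclusions
`F i ⊆ F (i + 1)`. It is finitely generated because the filtration is constant outside a finite
window `[a, b]`, and torsion-free because the lowest nonzero component of `p(z) • m` is the
trailing coefficient of `p` times the lowest component of `m`; over the PID `k[z]` this makes it
free. Summing the components identifies the fiber `M/(z-1)M` with `E`: the kernel of the sum is
`(z - 1)M` since `x ∈ F i` and its copy in `F (i + 1)` differ by `(z - 1) x`, and every element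
can be pushed into the degree `b` where `F b = E`.
-/

open DirectSum

theorem DirectSum.isInternal_map_range_lof {R ι N : Type*} [Semiring R] [DecidableEq ι]
    {M : ι → Type*} [∀ i, AddCommMonoid (M i)] [∀ i, Module R (M i)] [AddCommMonoid N]
    [Module R N] (e : (⨁ i, M i) ≃ₗ[R] N) :
    IsInternal fun i => (LinearMap.range (lof R ι M i)).map e.toLinearMap := by
  let e' : (⨁ i, M i) ≃ₗ[R] ⨁ i, (LinearMap.range (lof R ι M i)).map e.toLinearMap :=
    DFinsupp.mapRange.linearEquiv fun i =>
      (LinearEquiv.ofInjective _ fun _ _ h => of_injective i h).trans (e.submoduleMap _)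
  have he : coeLinearMap _ ∘ₗ e'.toLinearMap = e.toLinearMap :=
    linearMap_ext _ fun i => LinearMap.ext fun x => by
      have : e' (lof R ι M i x) = lof R ι _ i ⟨e (lof R ι M i x), _, ⟨x, rfl⟩, rfl⟩ :=
        DFinsupp.mapRange_single (hf := fun _ => map_zero _)
      simp only [LinearMap.comp_apply, LinearEquiv.coe_coe]
      rw [this, lof_eq_of, coeLinearMap_of]
  have hbij := congrArg DFunLike.coe he
  rw [LinearMap.coe_comp, LinearEquiv.coe_coe, LinearEquiv.coe_coe] at hbij
  exact (Function.Bijective.of_comp_iff _ e'.bijective).mp (hbij ▸ e.bijective)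

theorem DirectSum.map_coeLinearMap_range_lof {R ι M : Type*} [Semiring R] [DecidableEq ι]
    [AddCommMonoid M] [Module R M] (A : ι → Submodule R M) (i : ι) :
    (LinearMap.range (lof R ι (A ·) i)).map (coeLinearMap A) = A i := by
  rw [← LinearMap.range_comp]
  exact (congrArg LinearMap.range (LinearMap.ext fun x => coeLinearMap_of A i x)).trans
    (A i).range_subtype

theorem DirectSum.coe_apply_of_eq {ι M S : Type*} [SetLike S M] [AddCommMonoid M]
    [AddSubmonoidClass S M] {A : ι → S} {m : ⨁ i, A i} {i j : ι} (h : i = j) :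
    ((m i : A i) : M) = m j := by
  subst h; rfl

theorem DirectSum.exists_apply_ne_zero_forall_lt {ι : Type*} [LinearOrder ι] {M : ι → Type*}
    [∀ i, AddCommMonoid (M i)] [∀ i, DecidableEq (M i)] {m : ⨁ i, M i} (hm : m ≠ 0) :
    ∃ i, m i ≠ 0 ∧ ∀ j < i, m j = 0 := by
  have hs : m.support.Nonempty := by
    rwa [Finset.nonempty_iff_ne_empty, Ne, DFinsupp.support_eq_empty]
  refine ⟨m.support.min' hs, DFinsupp.mem_support_iff.mp (m.support.min'_mem hs),
    fun j hj => ?_⟩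
  by_contra hmj
  exact (m.support.min'_le j (DFinsupp.mem_support_iff.mpr hmj)).not_gt hj

namespace Module.AEval'

variable {R M E : Type*} [CommRing R] [AddCommGroup M] [Module R M] [AddCommGroup E] [Module R E]
  (f : Module.End R M)

theorem X_sub_one_smul_of (m : M) : (X - 1 : R[X]) • of f m = of f (f m - m) := by
  rw [sub_smul, one_smul, X_smul_of, map_sub]

theorem map_symm_zSubOneRange :
    (zSubOneRange R (AEval' f)).map (of f).symm.toLinearMap = LinearMap.range (f - 1) := by
  ext m
  simp only [zSubOneRange, zSubOne, Submodule.map_equiv_eq_comap_symm, LinearEquiv.symm_symm,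
    Submodule.mem_comap, LinearMap.mem_range, LinearMap.coe_mk, AddHom.coe_mk,
    (of f).surjective.exists, X_sub_one_smul_of, (of f).injective.eq_iff, LinearMap.sub_apply,
    Module.End.one_apply, LinearEquiv.coe_coe]

variable {f} (e : M →ₗ[R] E) (he : Function.Surjective e)
  (hker : LinearMap.ker e = LinearMap.range (f - 1))

noncomputable def quotZSubOneRangeEquiv : (AEval' f ⧸ zSubOneRange R (AEval' f)) ≃ₗ[R] E :=
  (Submodule.Quotient.equiv _ _ (of f).symm (by rw [map_symm_zSubOneRange, hker])).trans
    (e.quotKerEquivOfSurjective he)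

theorem quotZSubOneRangeEquiv_mk_of (m : M) :
    quotZSubOneRangeEquiv e he hker (Submodule.Quotient.mk (of f m)) = e m := by
  simp [quotZSubOneRangeEquiv]

theorem map_quotZSubOneRangeEquiv_map_mkQ (N : Submodule R M) :
    ((N.map (of f).toLinearMap).map (zSubOneRange R (AEval' f)).mkQ).map
      (quotZSubOneRangeEquiv e he hker).toLinearMap = N.map e := by
  simp only [← Submodule.map_comp]
  exact congrArg (N.map ·) (LinearMap.ext (quotZSubOneRangeEquiv_mk_of e he hker))

theorem eq_top_of_forall_of_lof_mem {ι : Type*} [DecidableEq ι] {N : ι → Type*}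
    [∀ i, AddCommGroup (N i)] [∀ i, Module R (N i)] {g : Module.End R (⨁ i, N i)}
    {P : Submodule R[X] (AEval' g)} (h : ∀ i (x : N i), of g (lof R ι N i x) ∈ P) :
    P = ⊤ := by
  refine eq_top_iff.mpr fun m _ => ?_
  rw [← (of g).apply_symm_apply m]
  induction (of g).symm m using DirectSum.induction_on with
  | zero => rw [map_zero]; exact P.zero_mem
  | of i x => exact h i x
  | add m m' hm hm' => rw [map_add]; exact P.add_mem hm hm'

end Module.AEval'

section Rees

variable {R E : Type*} [CommRing R] [AddCommGroup E] [Module R E]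
  {F : ℤ → Submodule R E} (hF : ∀ i, F i ≤ F (i + 1))

noncomputable def reesShift : (⨁ i, F i) →ₗ[R] ⨁ i, F i :=
  toModule R ℤ _ fun i => lof R ℤ (F ·) (i + 1) ∘ₗ Submodule.inclusion (hF i)

theorem reesShift_lof (i : ℤ) (x : F i) :
    reesShift hF (lof R ℤ (F ·) i x) = lof R ℤ (F ·) (i + 1) (Submodule.inclusion (hF i) x) :=
  toModule_lof ..

noncomputable def reesGrading (i : ℤ) : Submodule R (Module.AEval' (reesShift hF)) :=
  (LinearMap.range (lof R ℤ (F ·) i)).map (Module.AEval'.of _).toLinearMap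

theorem isInternal_reesGrading : IsInternal (reesGrading hF) :=
  isInternal_map_range_lof _

theorem X_smul_mem_reesGrading {i : ℤ} {m : Module.AEval' (reesShift hF)}
    (hm : m ∈ reesGrading hF i) : (X : R[X]) • m ∈ reesGrading hF (i + 1) := by
  obtain ⟨_, ⟨x, rfl⟩, rfl⟩ := hm
  exact ⟨_, ⟨Submodule.inclusion (hF i) x, rfl⟩, by
    rw [LinearEquiv.coe_coe, Module.AEval'.X_smul_of, reesShift_lof]⟩

theorem coe_reesShift_apply (m : ⨁ i, F i) (i : ℤ) :
    ((reesShift hF m i : F i) : E) = m (i - 1) := by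
  induction m using DirectSum.induction_on with
  | zero => rw [map_zero]; rfl
  | of j x =>
    rw [← lof_eq_of R, reesShift_lof, lof_eq_of, lof_eq_of, coe_of_apply, coe_of_apply]
    split_ifs <;> first | rfl | omega
  | add m m' hm hm' =>
    rw [map_add, DirectSum.add_apply, DirectSum.add_apply, Submodule.coe_add, Submodule.coe_add,
      hm, hm']

theorem coe_reesShift_pow_apply (d : ℕ) (m : ⨁ i, F i) (i : ℤ) :
    (((reesShift hF ^ d) m i : F i) : E) = m (i - d) := by
  induction d generalizing i with
  | zero => exact coe_apply_of_eq (by simp)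
  | succ d ih =>
    rw [pow_succ', Module.End.mul_apply, coe_reesShift_apply, ih]
    exact coe_apply_of_eq (by push_cast; ring)

theorem coe_aeval_reesShift_apply (p : R[X]) (m : ⨁ i, F i) (i : ℤ) :
    ((aeval (reesShift hF) p m i : F i) : E) =
      ∑ n ∈ Finset.range (p.natDegree + 1), p.coeff n • (m (i - n) : E) := by
  simp [aeval_eq_sum_range, DirectSum.smul_apply, coe_reesShift_pow_apply]

theorem coeLinearMap_comp_reesShift : coeLinearMap F ∘ₗ reesShift hF = coeLinearMap F :=
  linearMap_ext _ fun i => LinearMap.ext fun x => by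
    simp only [LinearMap.comp_apply]
    rw [reesShift_lof, lof_eq_of, lof_eq_of, coeLinearMap_of, coeLinearMap_of]
    rfl

theorem range_reesShift_sub_one_le_ker :
    LinearMap.range (reesShift hF - 1) ≤ LinearMap.ker (coeLinearMap F) := by
  rintro _ ⟨m, rfl⟩
  rw [LinearMap.mem_ker, LinearMap.sub_apply, Module.End.one_apply, map_sub,
    ← LinearMap.comp_apply, coeLinearMap_comp_reesShift, sub_self]

theorem mkQ_lof_eq_mkQ_lof_of_le {i j : ℤ} (hij : i ≤ j) (x : F i) :
    (LinearMap.range (reesShift hF - 1)).mkQ (lof R ℤ (F ·) i x) =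
      (LinearMap.range (reesShift hF - 1)).mkQ
        (lof R ℤ (F ·) j (Submodule.inclusion (monotone_int_of_le_succ hF hij) x)) := by
  induction j, hij using Int.leInduction with
  | base => rfl
  | succ j hij ih =>
    rw [ih, Submodule.mkQ_apply, Submodule.mkQ_apply, Submodule.Quotient.eq]
    refine ⟨-lof R ℤ (F ·) j (Submodule.inclusion (monotone_int_of_le_succ hF hij) x), ?_⟩
    rw [map_neg, LinearMap.sub_apply, Module.End.one_apply, reesShift_lof, neg_sub]
    rfl

theorem mkQ_lof_eq_mkQ_lof_ofTop_symm {b : ℤ} (hb : F b = ⊤) (i : ℤ) (x : F i) :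
    (LinearMap.range (reesShift hF - 1)).mkQ (lof R ℤ (F ·) i x) =
      (LinearMap.range (reesShift hF - 1)).mkQ
        (lof R ℤ (F ·) b ((LinearEquiv.ofTop _ hb).symm x)) := by
  rcases le_total i b with hib | hbi
  · exact mkQ_lof_eq_mkQ_lof_of_le hF hib x
  · exact (mkQ_lof_eq_mkQ_lof_of_le hF hbi ((LinearEquiv.ofTop _ hb).symm x)).symm

theorem ker_coeLinearMap_eq_range_reesShift_sub_one {b : ℤ} (hb : F b = ⊤) :
    LinearMap.ker (coeLinearMap F) = LinearMap.range (reesShift hF - 1) := by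
  refine le_antisymm (fun m hm => ?_) (range_reesShift_sub_one_le_ker hF)
  have hmk : (LinearMap.range (reesShift hF - 1)).mkQ =
      (LinearMap.range _).mkQ ∘ₗ lof R ℤ (F ·) b ∘ₗ
        (LinearEquiv.ofTop _ hb).symm.toLinearMap ∘ₗ coeLinearMap F :=
    linearMap_ext _ fun i => LinearMap.ext fun x => by
      simpa [lof_eq_of, coeLinearMap_of] using mkQ_lof_eq_mkQ_lof_ofTop_symm hF hb i x
  rw [← Submodule.Quotient.mk_eq_zero, ← Submodule.mkQ_apply, hmk]
  simp [LinearMap.mem_ker.mp hm]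

theorem coeLinearMap_surjective_of_eq_top {b : ℤ} (hb : F b = ⊤) :
    Function.Surjective (coeLinearMap F) := fun x =>
  ⟨lof R ℤ (F ·) b ((LinearEquiv.ofTop _ hb).symm x), by simp [lof_eq_of, coeLinearMap_of]⟩

theorem of_lof_mem_of_le_of_eq_top {P : Submodule R[X] (Module.AEval' (reesShift hF))} {b : ℤ}
    (hb : F b = ⊤) (hPb : ∀ x : F b, Module.AEval'.of _ (lof R ℤ (F ·) b x) ∈ P) {i : ℤ}
    (hbi : b ≤ i) (x : F i) : Module.AEval'.of _ (lof R ℤ (F ·) i x) ∈ P := by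
  induction i, hbi using Int.leInduction with
  | base => exact hPb x
  | succ i hbi ih =>
    have hx : (x : E) ∈ F i := by simp [eq_top_iff.mpr (hb ▸ monotone_int_of_le_succ hF hbi)]
    rw [show x = Submodule.inclusion (hF i) ⟨x, hx⟩ from rfl, ← reesShift_lof,
      ← Module.AEval'.X_smul_of]
    exact P.smul_mem X (ih _)

section Torsion

variable [IsDomain R] [Module.IsTorsionFree R E]

theorem aeval_reesShift_ne_zero {p : R[X]} (hp : p ≠ 0) {m : ⨁ i, F i} (hm : m ≠ 0) :
    aeval (reesShift hF) p m ≠ 0 := by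
  classical
  obtain ⟨i, hmi, hlt⟩ := DirectSum.exists_apply_ne_zero_forall_lt hm
  have hlowest : ((aeval (reesShift hF) p m (i + p.natTrailingDegree) : F _) : E) =
      p.trailingCoeff • (m i : E) := by
    rw [coe_aeval_reesShift_apply, Finset.sum_eq_single p.natTrailingDegree]
    · rw [coe_apply_of_eq (add_sub_cancel_right _ _)]; rfl
    · intro n _ hn
      rcases hn.lt_or_gt with hn | hn
      · rw [coeff_eq_zero_of_lt_natTrailingDegree hn, zero_smul]
      · rw [hlt _ (by omega), ZeroMemClass.coe_zero, smul_zero]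
    · exact fun h => (h (Finset.mem_range_succ_iff.mpr (natTrailingDegree_le_natDegree p))).elim
  intro h
  rw [h, DirectSum.zero_apply, ZeroMemClass.coe_zero] at hlowest
  exact smul_ne_zero (trailingCoeff_nonzero_iff_nonzero.mpr hp) (by simpa using hmi) hlowest.symm

theorem isTorsionFree_aeval'_reesShift :
    Module.IsTorsionFree R[X] (Module.AEval' (reesShift hF)) := by
  -- `AEval'` has its own `AddCommMonoid` instance, which does not unify with the one coming from
  -- `AddCommGroup` at instance transparency, so the instances are passed explicitly.
  refine @Module.IsTorsionFree.of_smul_eq_zero R[X] (Module.AEval' (reesShift hF)) _ _ _ _ ?_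
  intro p m h
  refine or_iff_not_imp_left.mpr fun hp => by_contra fun hm => ?_
  refine aeval_reesShift_ne_zero hF hp (m := (Module.AEval'.of (reesShift hF)).symm m) hm ?_
  rw [← Module.End.smul_def, ← Module.AEval.of_symm_smul, h, map_zero]

end Torsion

theorem finite_aeval'_reesShift [IsNoetherian R E] {a b : ℤ} (ha : F a = ⊥) (hb : F b = ⊤) :
    Module.Finite R[X] (Module.AEval' (reesShift hF)) := by
  obtain ⟨s, hs⟩ : (⨆ i ∈ Finset.Icc a b, LinearMap.range (lof R ℤ (F ·) i)).FG :=
    Submodule.fg_biSup _ _ fun i _ => LinearMap.range_eq_map (lof R ℤ (F ·) i) ▸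
      (Module.Finite.fg_top).map _
  set P := Submodule.span R[X] (Module.AEval'.of (reesShift hF) '' s)
  have hle : ∀ i ≤ b, ∀ x : F i, Module.AEval'.of _ (lof R ℤ (F ·) i x) ∈ P := by
    intro i hib x
    rcases le_total i a with hia | hai
    · obtain rfl : x = 0 := Subtype.ext (by simpa [ha] using monotone_int_of_le_succ hF hia x.2)
      simp
    · have hx : lof R ℤ (F ·) i x ∈ Submodule.span R (s : Set (⨁ i, F i)) :=
        hs ▸ le_biSup (fun i => LinearMap.range (lof R ℤ (F ·) i))
          (Finset.mem_coe.mpr (Finset.mem_Icc.mpr ⟨hai, hib⟩)) ⟨x, rfl⟩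
      have := Submodule.mem_map_of_mem (f := (Module.AEval'.of (reesShift hF)).toLinearMap) hx
      rw [Submodule.map_span, LinearEquiv.coe_toLinearMap] at this
      exact Submodule.span_le_restrictScalars R R[X] _ this
  have htop : P = ⊤ := Module.AEval'.eq_top_of_forall_of_lof_mem fun i x =>
    (le_total i b).elim (hle i · x) (of_lof_mem_of_le_of_eq_top hF hb (hle b le_rfl) · x)
  exact ⟨Submodule.fg_def.mpr ⟨_, s.finite_toSet.image _, htop⟩⟩

end Rees

/-- Every finite-dimensional vector space `E` over a field `k` with an
increasing, exhaustive, bounded `ℤ`-indexed filtration `(F_{≤i})` arises as the fiber at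
`1`, with its Klyachko filtration, of a `ℤ`-graded `k[z]`-module that is finitely
generated and free over `k[z]` (i.e. of a `𝔾ₘ`-equivariant vector bundle on `𝔸¹`). -/
theorem statement16 (k : Type) [Field k] (E : Type) [AddCommGroup E] [Module k E]
    [FiniteDimensional k E]
    (F : ℤ → Submodule k E)
    (hmono : ∀ i : ℤ, F i ≤ F (i + 1))
    (hbot : ∃ n : ℤ, ∀ i ≤ n, F i = ⊥)
    (htop : ∃ n : ℤ, ∀ i : ℤ, n ≤ i → F i = ⊤) :
    ∃ (M : Type) (_ : AddCommGroup M) (_ : Module k M) (_ : Module (Polynomial k) M)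
      (_ : IsScalarTower k (Polynomial k) M) (ℳ : ℤ → Submodule k M),
      DirectSum.IsInternal ℳ ∧
      (∀ i : ℤ, ∀ m ∈ ℳ i, (X : Polynomial k) • m ∈ ℳ (i + 1)) ∧
      Module.Finite (Polynomial k) M ∧ Module.Free (Polynomial k) M ∧
      ∃ φ : (M ⧸ zSubOneRange k M) ≃ₗ[k] E,
        ∀ i : ℤ, Submodule.map φ.toLinearMap (klyachkoF k M ℳ i) = F i := by
  obtain ⟨a, ha⟩ := hbot
  obtain ⟨b, hb⟩ := htop
  have := finite_aeval'_reesShift hmono (ha a le_rfl) (hb b le_rfl)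
  have := isTorsionFree_aeval'_reesShift hmono
  exact ⟨Module.AEval' (reesShift hmono), inferInstance, inferInstance, inferInstance,
    inferInstance, reesGrading hmono, isInternal_reesGrading hmono,
    fun _ _ => X_smul_mem_reesGrading hmono, inferInstance,
    Module.free_of_finite_type_torsion_free',
    Module.AEval'.quotZSubOneRangeEquiv _ (coeLinearMap_surjective_of_eq_top (hb b le_rfl))
      (ker_coeLinearMap_eq_range_reesShift_sub_one hmono (hb b le_rfl)),
    fun i => (Module.AEval'.map_quotZSubOneRangeEquiv_map_mkQ _ _ _ _).trans
      (map_coeLinearMap_range_lof F i)⟩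
end

section
/- Let R be a commutative ring and let M = ⊕_i M_i and N = ⊕_i N_i be ℤ-graded modules over the polynomial ring R[z] (z homogeneous of degree 1), on each of which multiplication by z is injective. For each i let F^M_{≤i} ⊆ M/(z−1)M and F^N_{≤i} ⊆ N/(z−1)N denote the Klyachko filtrations (images of the degree-i components). Then the map sending a degree-preserving R[z]-module homomorphism ψ : M → N to the induced R-linear map M/(z−1)M → N/(z−1)N is injective, and its image is exactly the set of R-linear maps φ : M/(z−1)M → N/(z−1)N satisfying φ(F^M_{≤i}) ⊆ F^N_{≤i} for all i ∈ ℤ. (This is the full faithfulness in Klyachko's equivalence between 𝔾_m-equivariant vector bundles on 𝔸¹ and filtered vector spaces.) -/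
open Polynomial

variable (R M : Type*) [CommRing R] [AddCommGroup M] [Module R M]
  [Module (Polynomial R) M] [IsScalarTower R (Polynomial R) M]

theorem zSubOneRange_le_comap {R M N : Type*} [CommRing R] [AddCommGroup M] [Module R M]
    [Module (Polynomial R) M] [IsScalarTower R (Polynomial R) M]
    [AddCommGroup N] [Module R N] [Module (Polynomial R) N]
    [IsScalarTower R (Polynomial R) N] (ψ : M →ₗ[Polynomial R] N) :
    zSubOneRange R M ≤ (zSubOneRange R N).comap (ψ.restrictScalars R) := by
  rintro x ⟨m, rfl⟩
  exact ⟨ψ m, by simp [zSubOne, zSubOneRange]⟩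

/-- The `R`-linear map `M/(z−1)M → N/(z−1)N` induced by an `R[z]`-linear map `ψ : M → N`. -/
noncomputable def fiberMap {R M N : Type*} [CommRing R] [AddCommGroup M] [Module R M]
    [Module (Polynomial R) M] [IsScalarTower R (Polynomial R) M]
    [AddCommGroup N] [Module R N] [Module (Polynomial R) N]
    [IsScalarTower R (Polynomial R) N] (ψ : M →ₗ[Polynomial R] N) :
    (M ⧸ zSubOneRange R M) →ₗ[R] (N ⧸ zSubOneRange R N) :=
  Submodule.mapQ (zSubOneRange R M) (zSubOneRange R N) (ψ.restrictScalars R)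
    (zSubOneRange_le_comap ψ)

/-!
A homogeneous element lying in `(z − 1)M` is zero: if `x ≠ 0` has components in degrees
`a ≤ … ≤ b`, then `(z − 1)x` has the components `-x_a` and `z x_b`, both nonzero as `z` is
injective, in the distinct degrees `a` and `b + 1`. So the quotient map is injective on each graded
piece of `N`, which makes a graded lift of `φ` unique. A lift exists degreewise because `φ`
respects the filtrations, and it commutes with `z` because `z m` and `m` have the same image in
the fiber.
-/

open DirectSum

section GradedLift

variable {S ι A B P Q : Type*} [Semiring S] [AddCommMonoid A] [Module S A]
  [AddCommMonoid B] [Module S B] [AddCommMonoid P] [Module S P] [AddCommMonoid Q] [Module S Q]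

theorem DirectSum.IsInternal.linearMap_ext [DecidableEq ι] {𝒜 : ι → Submodule S A}
    (h𝒜 : IsInternal 𝒜) {f g : A →ₗ[S] P} (hfg : ∀ i, ∀ a ∈ 𝒜 i, f a = g a) : f = g :=
  LinearMap.ext_on (s := ⋃ i, (𝒜 i : Set A))
    (by rw [← Submodule.iSup_eq_span, h𝒜.submodule_iSup_eq_top])
    (fun a ha => by obtain ⟨i, hi⟩ := Set.mem_iUnion.mp ha; exact hfg i a hi)

theorem exists_linearMap_lift_of_map_le [DecidableEq ι] (𝒜 : ι → Submodule S A)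
    [Decomposition 𝒜] (ℬ : ι → Submodule S B) (p : A →ₗ[S] P) (q : B →ₗ[S] Q)
    (hq : ∀ i, Set.InjOn q (ℬ i)) (φ : P →ₗ[S] Q)
    (hφ : ∀ i, ((𝒜 i).map p).map φ ≤ (ℬ i).map q) :
    ∃ ψ : A →ₗ[S] B, ∀ i, ∀ a ∈ 𝒜 i, ψ a ∈ ℬ i ∧ q (ψ a) = φ (p a) := by
  have hq' : ∀ i, Function.Injective (q ∘ₗ (ℬ i).subtype) :=
    fun i _ _ h => Subtype.ext (hq i (Subtype.mem _) (Subtype.mem _) h)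
  let e i := LinearEquiv.ofInjective _ (hq' i)
  let lift i : 𝒜 i →ₗ[S] LinearMap.range (q ∘ₗ (ℬ i).subtype) :=
    (φ ∘ₗ p ∘ₗ (𝒜 i).subtype).codRestrict _ fun a => by
      obtain ⟨b, hb, hba⟩ := hφ i ⟨p a, ⟨a, a.2, rfl⟩, rfl⟩
      exact ⟨⟨b, hb⟩, hba⟩
  let ψ : A →ₗ[S] B := toModule S ι B (fun i => (ℬ i).subtype ∘ₗ (e i).symm.toLinearMap ∘ₗ lift i)
    ∘ₗ (decomposeLinearEquiv 𝒜).toLinearMap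
  refine ⟨ψ, fun i a ha => ?_⟩
  have hψ : ψ a = ((e i).symm (lift i ⟨a, ha⟩) : B) := by
    simp only [ψ, LinearMap.comp_apply, LinearEquiv.coe_coe, decomposeLinearEquiv_apply,
      decompose_of_mem 𝒜 ha, ← lof_eq_of S, toModule_lof]
    rfl
  refine ⟨hψ ▸ Subtype.mem _, ?_⟩
  rw [hψ]
  exact congrArg Subtype.val ((e i).apply_symm_apply (lift i ⟨a, ha⟩))

end GradedLift

section PolynomialModule

variable {R M}
variable {N : Type*} [AddCommGroup N] [Module R N] [Module R[X] N] [IsScalarTower R R[X] N]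

theorem LinearMap.map_smul_of_map_X_smul (f : M →ₗ[R] N)
    (hf : ∀ m, f ((X : R[X]) • m) = (X : R[X]) • f m)
    (p : R[X]) (m : M) : f (p • m) = p • f m := by
  induction p using Polynomial.induction_on generalizing m with
  | C a => rw [← Polynomial.algebraMap_eq, algebraMap_smul, algebraMap_smul, map_smul]
  | add p q hp hq => rw [add_smul, add_smul, map_add, hp, hq]
  | monomial n a ih => rw [pow_succ, ← mul_assoc, mul_smul, ih, hf, ← mul_smul]

theorem mkQ_X_smul (m : M) :
    (zSubOneRange R M).mkQ ((X : R[X]) • m) = (zSubOneRange R M).mkQ m :=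
  (Submodule.Quotient.eq _).mpr ⟨m, by simp [zSubOne, sub_smul]⟩

end PolynomialModule

section Graded

variable {R M}
variable (ℳ : ℤ → Submodule R M) [Decomposition ℳ]

omit [IsScalarTower R R[X] M] in
theorem coe_decompose_X_smul (hdeg : ∀ i, ∀ m ∈ ℳ i, (X : R[X]) • m ∈ ℳ (i + 1))
    (y : M) (j : ℤ) :
    (decompose ℳ ((X : R[X]) • y) j : M) = (X : R[X]) • (decompose ℳ y (j - 1) : M) := by
  induction y using Decomposition.inductionOn ℳ generalizing j with
  | zero => simp
  | @homogeneous k y =>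
    have hXy := hdeg k y y.2
    by_cases hj : j = k + 1
    · subst hj
      rw [decompose_of_mem_same ℳ hXy, add_sub_cancel_right, decompose_of_mem_same ℳ y.2]
    · rw [decompose_of_mem_ne ℳ hXy (Ne.symm hj),
        decompose_of_mem_ne ℳ y.2 (by omega : k ≠ j - 1), smul_zero]
  | add y z hy hz =>
    simp only [smul_add, decompose_add, DirectSum.add_apply, Submodule.coe_add, hy, hz]

theorem disjoint_zSubOneRange (hdeg : ∀ i, ∀ m ∈ ℳ i, (X : R[X]) • m ∈ ℳ (i + 1))
    (hinj : Function.Injective (zMul R M)) (i : ℤ) : Disjoint (ℳ i) (zSubOneRange R M) := by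
  classical
  rw [Submodule.disjoint_def]
  rintro _ hm ⟨x, rfl⟩
  suffices x = 0 by simp [this]
  set c : ℤ → M := fun j => (decompose ℳ x j : M)
  have hc : ∀ j ≠ i, (X : R[X]) • c (j - 1) = c j := fun j hj => by
    have := decompose_of_mem_ne ℳ hm (Ne.symm hj)
    rwa [zSubOne, LinearMap.coe_mk, AddHom.coe_mk, sub_smul, one_smul, decompose_sub,
      DirectSum.sub_apply, Submodule.coe_sub, coe_decompose_X_smul ℳ hdeg, sub_eq_zero] at this
  set s := (decompose ℳ x).support
  have hc_ne : ∀ j, c j ≠ 0 ↔ j ∈ s := fun j => by simp [c, s]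
  by_contra hx
  have hs : s.Nonempty := by
    rw [Finset.nonempty_iff_ne_empty, Ne, DFinsupp.support_eq_empty, ← decompose_zero ℳ]
    exact fun h => hx ((decompose ℳ).injective h)
  have hmin := (hc_ne _).mpr (s.min'_mem hs)
  have hmax := (hc_ne _).mpr (s.max'_mem hs)
  have hbelow : c (s.min' hs - 1) = 0 := by
    by_contra h; exact absurd (s.min'_le _ ((hc_ne _).mp h)) (by omega)
  have habove : c (s.max' hs + 1) = 0 := by
    by_contra h; exact absurd (s.le_max' _ ((hc_ne _).mp h)) (by omega)
  by_cases hi : s.min' hs = i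
  · have := hc (s.max' hs + 1) (by have := s.min'_le_max' hs; omega)
    rw [add_sub_cancel_right, habove] at this
    exact hmax (hinj (this.trans (smul_zero _).symm))
  · exact hmin (by rw [← hc _ hi, hbelow, smul_zero])

theorem injOn_mkQ_zSubOneRange (hdeg : ∀ i, ∀ m ∈ ℳ i, (X : R[X]) • m ∈ ℳ (i + 1))
    (hinj : Function.Injective (zMul R M)) (i : ℤ) :
    Set.InjOn (zSubOneRange R M).mkQ (ℳ i) := fun _ hm _ hm' h =>
  sub_eq_zero.mp <| Submodule.disjoint_def.mp (disjoint_zSubOneRange ℳ hdeg hinj i) _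
    (sub_mem hm hm') ((Submodule.Quotient.eq _).mp h)

end Graded

section Klyachko

variable {R M}
variable {N : Type*} [AddCommGroup N] [Module R N] [Module R[X] N] [IsScalarTower R R[X] N]

theorem exists_graded_lift_of_map_klyachkoF_le (ℳ : ℤ → Submodule R M) [Decomposition ℳ]
    (hMdeg : ∀ i, ∀ m ∈ ℳ i, (X : R[X]) • m ∈ ℳ (i + 1)) (𝒩 : ℤ → Submodule R N)
    (hNdeg : ∀ i, ∀ n ∈ 𝒩 i, (X : R[X]) • n ∈ 𝒩 (i + 1))
    (hN : ∀ i, Set.InjOn (zSubOneRange R N).mkQ (𝒩 i))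
    (φ : (M ⧸ zSubOneRange R M) →ₗ[R] (N ⧸ zSubOneRange R N))
    (hφ : ∀ i, (klyachkoF R M ℳ i).map φ ≤ klyachkoF R N 𝒩 i) :
    ∃ ψ : M →ₗ[R[X]] N, ∀ i, ∀ m ∈ ℳ i,
      ψ m ∈ 𝒩 i ∧ (zSubOneRange R N).mkQ (ψ m) = φ ((zSubOneRange R M).mkQ m) := by
  obtain ⟨ψ, hψ⟩ := exists_linearMap_lift_of_map_le ℳ 𝒩 _ _ hN φ hφ
  have hX : ψ ∘ₗ zMul R M = zMul R N ∘ₗ ψ :=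
    (Decomposition.isInternal ℳ).linearMap_ext fun i m hm =>
      hN (i + 1) (hψ _ _ (hMdeg i m hm)).1 (hNdeg i _ (hψ i m hm).1) <| by
        simp only [LinearMap.comp_apply, zMul, LinearMap.coe_mk, AddHom.coe_mk, mkQ_X_smul,
          (hψ _ _ (hMdeg i m hm)).2, (hψ i m hm).2]
  exact ⟨{ ψ with map_smul' := ψ.map_smul_of_map_X_smul (LinearMap.congr_fun hX) }, hψ⟩

theorem fiberMap_eq_of_isInternal {ℳ : ℤ → Submodule R M} (hMint : IsInternal ℳ)
    {ψ : M →ₗ[R[X]] N} {φ : (M ⧸ zSubOneRange R M) →ₗ[R] (N ⧸ zSubOneRange R N)}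
    (h : ∀ i, ∀ m ∈ ℳ i, (zSubOneRange R N).mkQ (ψ m) = φ ((zSubOneRange R M).mkQ m)) :
    fiberMap ψ = φ :=
  Submodule.linearMap_qext _ (hMint.linearMap_ext h)

end Klyachko

theorem statement17_general (R M N : Type*) [CommRing R] [AddCommGroup M] [Module R M]
    [Module (Polynomial R) M] [IsScalarTower R (Polynomial R) M]
    [AddCommGroup N] [Module R N] [Module (Polynomial R) N]
    [IsScalarTower R (Polynomial R) N]
    (ℳ : ℤ → Submodule R M) (hMint : DirectSum.IsInternal ℳ)
    (hMdeg : ∀ i : ℤ, ∀ m ∈ ℳ i, (X : Polynomial R) • m ∈ ℳ (i + 1))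
    (𝒩 : ℤ → Submodule R N) (hNint : DirectSum.IsInternal 𝒩)
    (hNdeg : ∀ i : ℤ, ∀ m ∈ 𝒩 i, (X : Polynomial R) • m ∈ 𝒩 (i + 1))
    (hNinj : Function.Injective (zMul R N)) :
    Function.Injective
      (fun ψ : {ψ : M →ₗ[Polynomial R] N //
          ∀ i : ℤ, Submodule.map (ψ.restrictScalars R) (ℳ i) ≤ 𝒩 i} =>
        fiberMap ψ.val) ∧
    ∀ φ : (M ⧸ zSubOneRange R M) →ₗ[R] (N ⧸ zSubOneRange R N),
      (∀ i : ℤ, Submodule.map φ (klyachkoF R M ℳ i) ≤ klyachkoF R N 𝒩 i) ↔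
        ∃ ψ : M →ₗ[Polynomial R] N,
          (∀ i : ℤ, Submodule.map (ψ.restrictScalars R) (ℳ i) ≤ 𝒩 i) ∧
          fiberMap ψ = φ := by
  let := hMint.chooseDecomposition
  let := hNint.chooseDecomposition
  have hN := injOn_mkQ_zSubOneRange 𝒩 hNdeg hNinj
  refine ⟨?_, fun φ => ⟨fun hφ => ?_, ?_⟩⟩
  · rintro ⟨ψ₁, hψ₁⟩ ⟨ψ₂, hψ₂⟩ h
    refine Subtype.ext <| LinearMap.restrictScalars_injective R <| hMint.linearMap_ext
      fun i m hm => hN i (hψ₁ i ⟨m, hm, rfl⟩) (hψ₂ i ⟨m, hm, rfl⟩) ?_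
    exact LinearMap.congr_fun h ((zSubOneRange R M).mkQ m)
  · obtain ⟨ψ, hψ⟩ := exists_graded_lift_of_map_klyachkoF_le ℳ hMdeg 𝒩 hNdeg hN φ hφ
    exact ⟨ψ, fun i => Submodule.map_le_iff_le_comap.mpr fun m hm => (hψ i m hm).1,
      fiberMap_eq_of_isInternal hMint fun i m hm => (hψ i m hm).2⟩
  · rintro ⟨ψ, hψ, rfl⟩ i _ ⟨_, ⟨m, hm, rfl⟩, rfl⟩
    exact ⟨ψ m, hψ i ⟨m, hm, rfl⟩, rfl⟩

/-- (Full faithfulness in Klyachko's equivalence for `𝔸¹`.)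
For `ℤ`-graded `R[z]`-modules `M, N` with injective `z`-action, the assignment sending a
degree-preserving `R[z]`-linear map `ψ : M → N` to the induced map on fibers
`M/(z−1)M → N/(z−1)N` is injective, and its image consists exactly of the `R`-linear maps
`φ` compatible with the Klyachko filtrations: `φ(F^M_{≤i}) ⊆ F^N_{≤i}` for all `i`. -/
theorem statement17 (R M N : Type*) [CommRing R] [AddCommGroup M] [Module R M]
    [Module (Polynomial R) M] [IsScalarTower R (Polynomial R) M]
    [AddCommGroup N] [Module R N] [Module (Polynomial R) N]
    [IsScalarTower R (Polynomial R) N]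
    (ℳ : ℤ → Submodule R M) (hMint : DirectSum.IsInternal ℳ)
    (hMdeg : ∀ i : ℤ, ∀ m ∈ ℳ i, (X : Polynomial R) • m ∈ ℳ (i + 1))
    (hMinj : Function.Injective (zMul R M))
    (𝒩 : ℤ → Submodule R N) (hNint : DirectSum.IsInternal 𝒩)
    (hNdeg : ∀ i : ℤ, ∀ m ∈ 𝒩 i, (X : Polynomial R) • m ∈ 𝒩 (i + 1))
    (hNinj : Function.Injective (zMul R N)) :
    Function.Injective
      (fun ψ : {ψ : M →ₗ[Polynomial R] N //
          ∀ i : ℤ, Submodule.map (ψ.restrictScalars R) (ℳ i) ≤ 𝒩 i} =>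
        fiberMap ψ.val) ∧
    ∀ φ : (M ⧸ zSubOneRange R M) →ₗ[R] (N ⧸ zSubOneRange R N),
      (∀ i : ℤ, Submodule.map φ (klyachkoF R M ℳ i) ≤ klyachkoF R N 𝒩 i) ↔
        ∃ ψ : M →ₗ[Polynomial R] N,
          (∀ i : ℤ, Submodule.map (ψ.restrictScalars R) (ℳ i) ≤ 𝒩 i) ∧
          fiberMap ψ = φ :=
  statement17_general R M N ℳ hMint hMdeg 𝒩 hNint hNdeg hNinj
end
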